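/- arXiv:1206.3967 — 3 statements merged into one kernel-verified Lean document; each statement's English description precedes it below -/
import Mathlib

section
/- For every s ∈ ℝ and every w ∈ ℝ with w ≠ s, the function g_s is differentiable at w with derivative g_s'(w) = w·g_s(w) + 𝟙(w ≤ s) − Φ(s); in particular g_s solves Stein's equation g_s'(w) − w·g_s(w) = 𝟙(w ∈ (−∞, s]) − Φ(s) at every w ≠ s. -/
open MeasureTheory

noncomputable def Phi (s : ℝ) : ℝ :=
  ((ProbabilityTheory.gaussianReal 0 1) (Set.Iic s)).toReal

noncomputable def steinG (s w : ℝ) : ℝ :=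
  Real.exp (w ^ 2 / 2) *
    ∫ u in Set.Iic w, ((if u ≤ s then (1 : ℝ) else 0) - Phi s) * Real.exp (-u ^ 2 / 2)

/-!
Writing `g_s(x) = e^{x²/2} F(x)` with `F(x) = ∫_{-∞}^x f`, `f(u) = (𝟙(u ≤ s) - Φ(s)) e^{-u²/2}`,
the fundamental theorem of calculus gives `F' = f` wherever `f` is continuous, i.e. away from
the jump at `s`, and the product rule gives `g_s' = x g_s + e^{x²/2} f`, where
`e^{x²/2} f(x) = 𝟙(x ≤ s) - Φ(s)`.
-/

open Set Filter Topology Real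

theorem hasDerivAt_integral_Iic {f : ℝ → ℝ} {w : ℝ} (hf : Integrable f)
    (hcont : ContinuousAt f w) :
    HasDerivAt (fun x => ∫ u in Iic x, f u) (f w) w := by
  have hsplit : ∀ x, ∫ u in Iic x, f u = (∫ u in Iic w, f u) + ∫ u in w..x, f u := fun x => by
    rw [← intervalIntegral.integral_Iic_sub_Iic hf.integrableOn hf.integrableOn]
    ring
  have hright : HasDerivAt (fun x => ∫ u in w..x, f u) (f w) w :=
    intervalIntegral.integral_hasDerivAt_right hf.intervalIntegrable
      (hf.aestronglyMeasurable.stronglyMeasurableAtFilter) hcont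
  exact (hright.const_add _).congr_of_eventuallyEq (Eventually.of_forall hsplit)

theorem hasDerivAt_exp_sq_div_two_mul_integral_Iic {h : ℝ → ℝ} {w : ℝ}
    (hint : Integrable fun u => h u * exp (-u ^ 2 / 2)) (hcont : ContinuousAt h w) :
    HasDerivAt (fun x => exp (x ^ 2 / 2) * ∫ u in Iic x, h u * exp (-u ^ 2 / 2))
      (w * (exp (w ^ 2 / 2) * ∫ u in Iic w, h u * exp (-u ^ 2 / 2)) + h w) w := by
  have hexp : HasDerivAt (fun x => exp (x ^ 2 / 2)) (exp (w ^ 2 / 2) * w) w := by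
    simpa using ((hasDerivAt_pow 2 w).div_const 2).exp
  have hF := hasDerivAt_integral_Iic hint (hcont.mul (by fun_prop))
  refine (hexp.fun_mul hF).congr_deriv ?_
  have hcancel : exp (w ^ 2 / 2) * exp (-w ^ 2 / 2) = 1 := by
    rw [← exp_add, neg_div, add_neg_cancel, exp_zero]
  linear_combination h w * hcancel

theorem integrable_exp_neg_sq_div_two : Integrable fun u : ℝ => exp (-u ^ 2 / 2) := by
  simpa [neg_div, div_eq_inv_mul] using integrable_exp_neg_mul_sq (b := 1 / 2) (by norm_num)

theorem continuousAt_ite_le_of_ne {β : Type*} [TopologicalSpace β] {s w : ℝ} (hw : w ≠ s)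
    (a b : β) : ContinuousAt (fun u => if u ≤ s then a else b) w := by
  rcases hw.lt_or_gt with hlt | hgt
  · refine (continuousAt_const (y := a)).congr ?_
    filter_upwards [Iio_mem_nhds hlt] with u hu
    simp [(mem_Iio.mp hu).le]
  · refine (continuousAt_const (y := b)).congr ?_
    filter_upwards [Ioi_mem_nhds hgt] with u hu
    simp [not_le.mpr (mem_Ioi.mp hu)]

theorem integrable_ite_le_sub_const_mul_exp (s c : ℝ) :
    Integrable fun u => ((if u ≤ s then (1 : ℝ) else 0) - c) * exp (-u ^ 2 / 2) := by
  refine integrable_exp_neg_sq_div_two.bdd_mul (c := 1 + |c|) ?_ (ae_of_all _ fun u => ?_)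
  · exact ((Measurable.ite measurableSet_Iic measurable_const measurable_const).sub
      measurable_const).aestronglyMeasurable
  · refine (norm_sub_le _ _).trans (add_le_add ?_ le_rfl)
    split_ifs <;> norm_num

/-- At every `w ≠ s`, the Stein solution `g_s` is differentiable with derivative
`w * g_s w + 𝟙(w ≤ s) - Φ s`; in particular it solves Stein's equation there. -/
theorem steinG_hasDerivAt (s w : ℝ) (hw : w ≠ s) :
    HasDerivAt (steinG s) (w * steinG s w + (if w ≤ s then (1 : ℝ) else 0) - Phi s) w := by
  have hcont : ContinuousAt (fun u => (if u ≤ s then (1 : ℝ) else 0) - Phi s) w :=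
    (continuousAt_ite_le_of_ne hw 1 0).sub continuousAt_const
  rw [add_sub_assoc]
  exact hasDerivAt_exp_sq_div_two_mul_integral_Iic
    (integrable_ite_le_sub_const_mul_exp s (Phi s)) hcont
end

section
/- For every s ∈ ℝ and every w ∈ ℝ, 0 < g_s(w) ≤ √(2π)/4. -/
open MeasureTheory

/-!
With `Φ(s) = (2π)^{-1/2} ∫_{-∞}^s e^{-u²/2} du`, the integral in `g_s(w)` is
`√(2π) (Φ(min s w) - Φ(s) Φ(w)) = √(2π) Φ(min s w) (1 - Φ(max s w))`. This is positive, and since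
`Φ` is increasing it is at most `√(2π) Φ(w) (1 - Φ(w))`, so it remains to show
`Φ(w) (1 - Φ(w)) ≤ e^{-w²/2} / 4`. By the symmetry `Φ(-w) = 1 - Φ(w)` this is Pólya's inequality
`(∫₀^w e^{-u²/2} du)² ≥ (π/2) (1 - e^{-w²/2})` for `w ≥ 0`. The difference `A` (`polyaGap`) of
its two sides vanishes at `0` and at `∞`, and `A' = e^{-w²/2} B` where `B` (`polyaGapFactor`) is
concave with `B(0) = 0`; so once `B` turns negative it stays negative, and `A` first increases and
then decreases.
-/

open Real Set Filter Topology

noncomputable def gaussWeight (u : ℝ) : ℝ := exp (-u ^ 2 / 2)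

lemma gaussWeight_eq_exp_neg_half_mul_sq : gaussWeight = fun u ↦ exp (-(1 / 2) * u ^ 2) := by
  funext u; rw [gaussWeight]; ring_nf

lemma gaussWeight_pos (u : ℝ) : 0 < gaussWeight u := exp_pos _

lemma gaussWeight_neg (u : ℝ) : gaussWeight (-u) = gaussWeight u := by
  simp [gaussWeight]

lemma integrable_gaussWeight : Integrable gaussWeight := by
  rw [gaussWeight_eq_exp_neg_half_mul_sq]; exact integrable_exp_neg_mul_sq (by norm_num)

lemma continuous_gaussWeight : Continuous gaussWeight := by
  unfold gaussWeight; fun_prop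

lemma hasDerivAt_gaussWeight (x : ℝ) : HasDerivAt gaussWeight (-x * gaussWeight x) x := by
  have h : HasDerivAt (fun x : ℝ ↦ -x ^ 2 / 2) (-x) x :=
    (((hasDerivAt_pow 2 x).neg).div_const 2).congr_deriv (by ring)
  exact ((hasDerivAt_exp _).comp x h).congr_deriv (by rw [gaussWeight]; ring)

lemma tendsto_gaussWeight : Tendsto gaussWeight atTop (𝓝 0) :=
  tendsto_exp_atBot.comp <|
    (tendsto_neg_atBot_iff.2 (tendsto_pow_atTop two_ne_zero)).atBot_div_const two_pos

lemma integral_gaussWeight : ∫ u, gaussWeight u = √(2 * π) := by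
  rw [gaussWeight_eq_exp_neg_half_mul_sq, integral_gaussian]; ring_nf

lemma integral_Ioi_zero_gaussWeight : ∫ u in Ioi 0, gaussWeight u = √(2 * π) / 2 := by
  rw [gaussWeight_eq_exp_neg_half_mul_sq, integral_gaussian_Ioi]; ring_nf

lemma sqrt_two_pi_pos : 0 < √(2 * π) := by positivity

noncomputable def gaussPrimitive (x : ℝ) : ℝ := ∫ u in 0..x, gaussWeight u

lemma gaussPrimitive_zero : gaussPrimitive 0 = 0 := intervalIntegral.integral_same

lemma hasDerivAt_gaussPrimitive (x : ℝ) : HasDerivAt gaussPrimitive (gaussWeight x) x :=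
  intervalIntegral.integral_hasDerivAt_right integrable_gaussWeight.intervalIntegrable
    continuous_gaussWeight.stronglyMeasurable.stronglyMeasurableAtFilter
    continuous_gaussWeight.continuousAt

lemma tendsto_gaussPrimitive : Tendsto gaussPrimitive atTop (𝓝 (√(2 * π) / 2)) :=
  integral_Ioi_zero_gaussWeight ▸ intervalIntegral_tendsto_integral_Ioi 0
    integrable_gaussWeight.integrableOn tendsto_id

lemma Phi_eq_integral (s : ℝ) : Phi s = (∫ u in Iic s, gaussWeight u) / √(2 * π) := by
  have hpdf (u : ℝ) : ProbabilityTheory.gaussianPDFReal 0 1 u = (√(2 * π))⁻¹ * gaussWeight u := by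
    simp [ProbabilityTheory.gaussianPDFReal, gaussWeight]
  rw [Phi, ProbabilityTheory.gaussianReal_apply_eq_integral 0 one_ne_zero, funext hpdf,
    integral_const_mul, ENNReal.toReal_ofReal, inv_mul_eq_div]
  exact mul_nonneg (by positivity) (setIntegral_nonneg measurableSet_Iic fun u _ ↦
    (gaussWeight_pos u).le)

lemma Phi_pos (s : ℝ) : 0 < Phi s := by
  rw [Phi_eq_integral]
  refine div_pos ?_ sqrt_two_pi_pos
  rw [setIntegral_pos_iff_support_of_nonneg_ae (.of_forall fun u ↦ (gaussWeight_pos u).le)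
    integrable_gaussWeight.integrableOn, Function.support_eq_univ fun u ↦ (gaussWeight_pos u).ne',
    univ_inter]
  simp

lemma Phi_neg (s : ℝ) : Phi (-s) = 1 - Phi s := by
  have hIoi : ∫ u in Iic (-s), gaussWeight u = ∫ u in Ioi s, gaussWeight u := by
    simpa only [gaussWeight_neg, neg_neg] using integral_comp_neg_Iic (-s) gaussWeight
  have hsplit := intervalIntegral.integral_Iic_add_Ioi (b := s)
    integrable_gaussWeight.integrableOn integrable_gaussWeight.integrableOn
  rw [integral_gaussWeight] at hsplit
  rw [Phi_eq_integral, Phi_eq_integral, hIoi, eq_sub_iff_add_eq, ← add_div, add_comm, hsplit,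
    div_self sqrt_two_pi_pos.ne']

lemma Phi_lt_one (s : ℝ) : Phi s < 1 := by
  linarith [Phi_pos (-s), Phi_neg s]

lemma Phi_zero : Phi 0 = 1 / 2 := by
  linarith [neg_zero (G := ℝ) ▸ Phi_neg 0]

lemma Phi_mono : Monotone Phi := fun _ _ h ↦
  ENNReal.toReal_mono (measure_ne_top _ _) (measure_mono (Iic_subset_Iic.2 h))

lemma Phi_eq_half_add_gaussPrimitive (w : ℝ) :
    Phi w = 1 / 2 + gaussPrimitive w / √(2 * π) := by
  rw [gaussPrimitive, ← intervalIntegral.integral_Iic_sub_Iic integrable_gaussWeight.integrableOn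
    integrable_gaussWeight.integrableOn, sub_div, ← Phi_eq_integral, ← Phi_eq_integral,
    Phi_zero]
  ring

lemma ConcaveOn.neg_of_neg_of_le {s : Set ℝ} {f : ℝ → ℝ} (hf : ConcaveOn ℝ s f)
    {a z y : ℝ} (ha : a ∈ s) (hy : y ∈ s) (haz : a < z) (hzy : z ≤ y) (hfa : 0 ≤ f a)
    (hfz : f z < 0) :
    f y < 0 := by
  have hya : 0 < y - a := by linarith
  have hμ : 0 ≤ (y - z) / (y - a) := div_nonneg (sub_nonneg.2 hzy) hya.le
  have hν : 0 ≤ (z - a) / (y - a) := div_nonneg (sub_nonneg.2 haz.le) hya.le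
  have hcomb := hf.2 ha hy hμ hν (by field_simp; ring)
  rw [smul_eq_mul, smul_eq_mul, smul_eq_mul, smul_eq_mul,
    show (y - z) / (y - a) * a + (z - a) / (y - a) * y = z by field_simp; ring] at hcomb
  by_contra! hfy
  nlinarith [mul_nonneg hμ hfa, mul_nonneg hν hfy]

noncomputable def polyaGap (x : ℝ) : ℝ := gaussPrimitive x ^ 2 - π / 2 * (1 - gaussWeight x)

noncomputable def polyaGapFactor (x : ℝ) : ℝ := 2 * gaussPrimitive x - π / 2 * x

lemma polyaGap_zero : polyaGap 0 = 0 := by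
  simp [polyaGap, gaussPrimitive_zero, gaussWeight]

lemma polyaGapFactor_zero : polyaGapFactor 0 = 0 := by
  simp [polyaGapFactor, gaussPrimitive_zero]

lemma hasDerivAt_polyaGap (x : ℝ) :
    HasDerivAt polyaGap (gaussWeight x * polyaGapFactor x) x := by
  refine (((hasDerivAt_gaussPrimitive x).pow 2).sub
    (((hasDerivAt_gaussWeight x).const_sub 1).const_mul (π / 2))).congr_deriv ?_
  simp only [polyaGapFactor]
  ring

lemma hasDerivAt_polyaGapFactor (x : ℝ) :
    HasDerivAt polyaGapFactor (2 * gaussWeight x - π / 2) x := by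
  refine (((hasDerivAt_gaussPrimitive x).const_mul 2).sub
    ((hasDerivAt_id x).const_mul (π / 2))).congr_deriv ?_
  simp

lemma tendsto_polyaGap : Tendsto polyaGap atTop (𝓝 0) := by
  have h := (tendsto_gaussPrimitive.pow 2).sub
    ((tendsto_gaussWeight.const_sub 1).const_mul (π / 2))
  rwa [div_pow, sq_sqrt (by positivity), sub_zero, mul_one,
    show 2 * π / 2 ^ 2 - π / 2 = 0 by ring] at h

lemma concaveOn_polyaGapFactor : ConcaveOn ℝ (Ici 0) polyaGapFactor := by
  refine concaveOn_of_hasDerivWithinAt2_nonpos (convex_Ici 0)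
    (fun x _ ↦ (hasDerivAt_polyaGapFactor x).continuousAt.continuousWithinAt)
    (fun x _ ↦ (hasDerivAt_polyaGapFactor x).hasDerivWithinAt)
    (fun x _ ↦ (((hasDerivAt_gaussWeight x).const_mul 2).sub_const (π / 2)).hasDerivWithinAt) ?_
  rw [interior_Ici]
  intro x (hx : 0 < x)
  nlinarith [gaussWeight_pos x]

lemma polyaGap_nonneg {w : ℝ} (hw : 0 ≤ w) : 0 ≤ polyaGap w := by
  by_cases hB : ∀ z ∈ Icc 0 w, 0 ≤ polyaGapFactor z
  · have hmono : MonotoneOn polyaGap (Icc 0 w) :=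
      monotoneOn_of_hasDerivWithinAt_nonneg (convex_Icc 0 w)
        (fun x _ ↦ (hasDerivAt_polyaGap x).continuousAt.continuousWithinAt)
        (fun x _ ↦ (hasDerivAt_polyaGap x).hasDerivWithinAt)
        (fun x hx ↦ mul_nonneg (gaussWeight_pos x).le (hB x (interior_subset hx)))
    simpa [polyaGap_zero] using hmono ⟨le_rfl, hw⟩ ⟨hw, le_rfl⟩ hw
  · push Not at hB
    obtain ⟨z, ⟨hz0, hzw⟩, hBz⟩ := hB
    have hz_pos : 0 < z := hz0.lt_of_ne (by rintro rfl; simp [polyaGapFactor_zero] at hBz)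
    have hBneg : ∀ y ∈ Ici w, polyaGapFactor y < 0 := fun y hy ↦
      concaveOn_polyaGapFactor.neg_of_neg_of_le self_mem_Ici (hw.trans hy) hz_pos (hzw.trans hy)
        polyaGapFactor_zero.ge hBz
    have hanti : AntitoneOn polyaGap (Ici w) :=
      antitoneOn_of_hasDerivWithinAt_nonpos (convex_Ici w)
        (fun x _ ↦ (hasDerivAt_polyaGap x).continuousAt.continuousWithinAt)
        (fun x _ ↦ (hasDerivAt_polyaGap x).hasDerivWithinAt)
        (fun x hx ↦ mul_nonpos_of_nonneg_of_nonpos (gaussWeight_pos x).le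
          (hBneg x (interior_subset hx)).le)
    exact le_of_tendsto tendsto_polyaGap
      ((eventually_ge_atTop w).mono fun y hy ↦ hanti self_mem_Ici hy hy)

lemma Phi_mul_one_sub_Phi_le (w : ℝ) : Phi w * (1 - Phi w) ≤ gaussWeight w / 4 := by
  wlog hw : 0 ≤ w generalizing w
  · simpa [Phi_neg, gaussWeight_neg, mul_comm] using this (-w) (by linarith)
  have hgap := polyaGap_nonneg hw
  rw [polyaGap] at hgap
  have hsq : (1 - gaussWeight w) / 4 ≤ (gaussPrimitive w / √(2 * π)) ^ 2 := by
    rw [div_pow, sq_sqrt (by positivity), div_le_div_iff₀ (by norm_num) (by positivity)]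
    nlinarith [pi_pos]
  rw [Phi_eq_half_add_gaussPrimitive]
  nlinarith

lemma integral_Iic_indicator_sub_Phi (s w : ℝ) :
    ∫ u in Iic w, ((if u ≤ s then (1 : ℝ) else 0) - Phi s) * exp (-u ^ 2 / 2)
      = √(2 * π) * (Phi (min s w) - Phi s * Phi w) := by
  have hfun : ∀ u, ((if u ≤ s then (1 : ℝ) else 0) - Phi s) * exp (-u ^ 2 / 2)
      = (Iic s).indicator gaussWeight u - Phi s * gaussWeight u := by
    intro u
    by_cases h : u ≤ s <;> simp [indicator, h, gaussWeight, sub_mul]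
  simp_rw [hfun]
  rw [integral_sub (integrable_gaussWeight.indicator measurableSet_Iic).integrableOn
    (integrable_gaussWeight.const_mul (Phi s)).integrableOn, integral_const_mul,
    setIntegral_indicator measurableSet_Iic,
    Iic_inter_Iic, inf_comm, Phi_eq_integral, Phi_eq_integral (min s w), Phi_eq_integral w]
  field_simp

lemma steinG_eq (s w : ℝ) :
    steinG s w = √(2 * π) * exp (w ^ 2 / 2) * (Phi (min s w) * (1 - Phi (max s w))) := by
  rw [steinG, integral_Iic_indicator_sub_Phi]
  rcases le_total s w with h | h
  · rw [min_eq_left h, max_eq_right h]; ring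
  · rw [min_eq_right h, max_eq_left h]; ring

/-- The Stein solution satisfies `0 < g_s w ≤ √(2π)/4` for all `s, w ∈ ℝ`. -/
theorem steinG_pos_and_le (s w : ℝ) :
    0 < steinG s w ∧ steinG s w ≤ Real.sqrt (2 * Real.pi) / 4 := by
  have hmin := Phi_pos (min s w)
  have hmax := Phi_lt_one (max s w)
  have hprod : Phi (min s w) * (1 - Phi (max s w)) ≤ Phi w * (1 - Phi w) :=
    mul_le_mul (Phi_mono (min_le_right s w)) (by linarith [Phi_mono (le_max_right s w)])
      (by linarith) (Phi_pos w).le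
  rw [steinG_eq]
  constructor
  · have : 0 < 1 - Phi (max s w) := by linarith
    positivity
  · calc √(2 * π) * exp (w ^ 2 / 2) * (Phi (min s w) * (1 - Phi (max s w)))
        ≤ √(2 * π) * exp (w ^ 2 / 2) * (gaussWeight w / 4) := by
          gcongr
          exact hprod.trans (Phi_mul_one_sub_Phi_le w)
      _ = √(2 * π) / 4 * (exp (w ^ 2 / 2) * gaussWeight w) := by ring
      _ = √(2 * π) / 4 := by
          rw [gaussWeight, ← exp_add, neg_div, add_neg_cancel, exp_zero, mul_one]
end

section
/- The function g_s is continuous on ℝ and infinitely differentiable on ℝ \ {s}, for every s ∈ ℝ. -/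
open MeasureTheory

namespace SteinAux

open Set Filter

noncomputable def em (u : ℝ) : ℝ := Real.exp (-u ^ 2 / 2)

lemma em_cont : Continuous em := by unfold em; fun_prop

lemma em_int : Integrable em := by
  have h : em = fun u => Real.exp (-(1/2) * u ^ 2) := by
    funext u; unfold em; ring_nf
  rw [h]; exact integrable_exp_neg_mul_sq (by norm_num)

/-- coefficients of the series of `u ↦ exp (-u^2/2)` in `u^2`. -/
noncomputable def b (k : ℕ) : ℝ := (-1/2 : ℝ) ^ k / (Nat.factorial k)

lemma abs_b (k : ℕ) : |b k| = (1/2 : ℝ) ^ k / (Nat.factorial k) := by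
  unfold b
  rw [abs_div, abs_pow, Nat.abs_cast, show |(-1/2 : ℝ)| = 1/2 from by
    rw [abs_of_nonpos (by norm_num)]; norm_num]

/-- coefficients of the antiderivative series. -/
noncomputable def c (n : ℕ) : ℝ :=
  if n % 2 = 1 then b ((n - 1) / 2) / n else 0

lemma c_odd (k : ℕ) : c (2 * k + 1) = b k / (2 * k + 1) := by
  unfold c
  rw [if_pos (by omega), show (2 * k + 1 - 1) / 2 = k by omega]
  push_cast
  try ring

lemma c_even (n : ℕ) (h : n % 2 = 0) : c n = 0 := by
  unfold c; rw [if_neg (by omega)]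

lemma abs_c_odd_le (k : ℕ) : |c (2 * k + 1)| ≤ (1/2 : ℝ) ^ k / (Nat.factorial k) := by
  rw [c_odd, abs_div, abs_b]
  have h1 : (1:ℝ) ≤ |(2 * (k:ℝ) + 1)| := by
    rw [abs_of_nonneg (by positivity)]; nlinarith [Nat.cast_nonneg (α := ℝ) k]
  calc (1/2 : ℝ) ^ k / (Nat.factorial k) / |2 * (k:ℝ) + 1|
      ≤ (1/2 : ℝ) ^ k / (Nat.factorial k) / 1 := by
        apply div_le_div_of_nonneg_left _ one_pos
        · exact h1
        · positivity
    _ = (1/2 : ℝ) ^ k / (Nat.factorial k) := by ring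

lemma summable_b_sq (M : ℝ) : Summable fun k => |b k| * M ^ (2 * k) := by
  have h : (fun k => |b k| * M ^ (2 * k)) = fun k => (M ^ 2 / 2) ^ k / (Nat.factorial k) := by
    funext k
    rw [abs_b, pow_mul, div_pow]
    field_simp
    rw [one_pow, ← mul_pow]; congr 1; ring
  rw [h]
  exact Real.summable_pow_div_factorial _

noncomputable def q : FormalMultilinearSeries ℝ ℝ ℝ := FormalMultilinearSeries.ofScalars ℝ c

lemma oddInj : Function.Injective (fun k : ℕ => 2 * k + 1) := fun a b h => by
  have h' : 2 * a + 1 = 2 * b + 1 := h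
  omega

lemma not_range_odd {n : ℕ} (hn : n ∉ Set.range (fun k : ℕ => 2 * k + 1)) : n % 2 = 0 := by
  rcases Nat.even_or_odd n with h | h
  · obtain ⟨m, hm⟩ := h; omega
  · exfalso; obtain ⟨m, hm⟩ := h; exact hn ⟨m, show 2 * m + 1 = n by omega⟩

lemma summable_abs_c (r : ℝ) (hr : 0 ≤ r) : Summable fun n => |c n| * r ^ n := by
  have hvan : ∀ n ∉ Set.range (fun k : ℕ => 2 * k + 1), |c n| * r ^ n = 0 := by
    intro n hn
    rw [c_even n (not_range_odd hn)]
    simp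
  have hle : ∀ k : ℕ, |c (2 * k + 1)| * r ^ (2 * k + 1)
      ≤ r * ((r ^ 2 / 2) ^ k / (Nat.factorial k)) := by
    intro k
    have h1 : r ^ (2 * k + 1) = (r ^ 2) ^ k * r := by
      rw [pow_succ, pow_mul]
    have h2 := abs_c_odd_le k
    have h3 : (0:ℝ) ≤ r ^ (2 * k + 1) := by positivity
    calc |c (2 * k + 1)| * r ^ (2 * k + 1)
        ≤ ((1/2 : ℝ) ^ k / (Nat.factorial k)) * r ^ (2 * k + 1) :=
          mul_le_mul_of_nonneg_right h2 h3
      _ = r * ((r ^ 2 / 2) ^ k / (Nat.factorial k)) := by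
          rw [h1, div_pow, div_pow]
          field_simp
          ring
  have hcomp : Summable ((fun n => |c n| * r ^ n) ∘ (fun k : ℕ => 2 * k + 1)) := by
    apply Summable.of_nonneg_of_le (fun k => by positivity) hle
    exact (Real.summable_pow_div_factorial _).mul_left r
  exact (oddInj.summable_iff hvan).mp hcomp

lemma q_radius : q.radius = ⊤ := by
  apply FormalMultilinearSeries.radius_eq_top_of_summable_norm
  intro r
  have h := summable_abs_c r r.coe_nonneg
  have h2 : ∀ n, ‖q n‖ = |c n| := fun n => by
    rw [show q n = FormalMultilinearSeries.ofScalars ℝ c n from rfl,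
      FormalMultilinearSeries.ofScalars_norm, Real.norm_eq_abs]
  simp only [h2]
  exact h

lemma q_contDiff : ContDiff ℝ (⊤ : ℕ∞) q.sum := by
  have hball : HasFPowerSeriesOnBall q.sum q 0 ⊤ := by
    have h := q.hasFPowerSeriesOnBall (by rw [q_radius]; exact ENNReal.zero_lt_top)
    rwa [q_radius] at h
  rw [contDiff_iff_contDiffAt]
  intro x
  exact (hball.analyticAt_of_mem (by simp [edist_lt_top])).contDiffAt

lemma exp_hasSum (u : ℝ) : HasSum (fun k => b k * u ^ (2 * k)) (em u) := by
  have h := NormedSpace.expSeries_div_hasSum_exp (-u ^ 2 / 2 : ℝ)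
  rw [← Real.exp_eq_exp_ℝ] at h
  have he : (fun k : ℕ => b k * u ^ (2 * k)) = fun k => (-u ^ 2 / 2) ^ k / (Nat.factorial k) := by
    funext k
    rw [pow_mul, show (-u ^ 2 / 2 : ℝ) = (-1/2) * u ^ 2 from by ring, mul_pow]
    unfold b
    ring
  rw [he]
  exact h

lemma abs_le_of_mem_uIoc {w t : ℝ} (ht : t ∈ Set.uIoc 0 w) : |t| ≤ |w| := by
  rcases le_total 0 w with h | h
  · rw [Set.uIoc_of_le h] at ht
    rw [abs_of_pos ht.1, abs_of_nonneg h]; exact ht.2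
  · rw [Set.uIoc_of_ge h] at ht
    rw [abs_of_nonpos (ht.2), abs_of_nonpos h]; linarith [ht.1]

lemma sum_eq_integral (w : ℝ) : q.sum w = ∫ u in (0:ℝ)..w, em u := by
  have hswap : HasSum (fun k => ∫ u in (0:ℝ)..w, b k * u ^ (2 * k)) (∫ u in (0:ℝ)..w, em u) := by
    apply intervalIntegral.hasSum_integral_of_dominated_convergence
      (bound := fun k _ => |b k| * |w| ^ (2 * k))
    · exact fun k => (Continuous.aestronglyMeasurable (by fun_prop))
    · intro k
      filter_upwards with t ht
      rw [Real.norm_eq_abs, abs_mul, abs_pow]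
      exact mul_le_mul_of_nonneg_left
        (pow_le_pow_left₀ (abs_nonneg t) (abs_le_of_mem_uIoc ht) _) (abs_nonneg _)
    · filter_upwards with t ht
      exact summable_b_sq |w|
    · exact intervalIntegrable_const
    · filter_upwards with t ht
      exact exp_hasSum t
  have hval : (fun k => ∫ u in (0:ℝ)..w, b k * u ^ (2 * k))
      = fun k => c (2 * k + 1) * w ^ (2 * k + 1) := by
    funext k
    rw [intervalIntegral.integral_const_mul, integral_pow, c_odd]
    push_cast
    ring
  rw [hval] at hswap
  have hfull : HasSum (fun n => c n * w ^ n) (∫ u in (0:ℝ)..w, em u) := by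
    refine (Function.Injective.hasSum_iff oddInj ?_).1 hswap
    intro n hn
    rw [c_even n (not_range_odd hn)]
    simp
  rw [← hfull.tsum_eq]
  unfold FormalMultilinearSeries.sum
  apply tsum_congr
  intro n
  rw [show q n = FormalMultilinearSeries.ofScalars ℝ c n from rfl,
    FormalMultilinearSeries.ofScalars_apply_eq]
  simp [smul_eq_mul]

noncomputable def A (w : ℝ) : ℝ := ∫ u in Set.Iic w, em u

lemma A_eq : A = fun w => A 0 + q.sum w := by
  funext w
  have h := intervalIntegral.integral_Iic_sub_Iic (μ := volume)
    em_int.integrableOn em_int.integrableOn (a := (0:ℝ)) (b := w)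
  rw [sum_eq_integral]
  unfold A
  linarith [h]

lemma A_contDiff : ContDiff ℝ (⊤ : ℕ∞) A := by
  rw [A_eq]
  exact contDiff_const.add q_contDiff

lemma f_int (s : ℝ) :
    Integrable (fun u => ((if u ≤ s then (1:ℝ) else 0) - Phi s) * em u) := by
  have h1 : Integrable (fun u => Set.indicator (Set.Iic s) em u) :=
    em_int.indicator measurableSet_Iic
  have h2 : Integrable (fun u => Phi s * em u) := em_int.const_mul _
  have h := h1.sub h2
  exact h.congr (Filter.Eventually.of_forall fun u => by
    by_cases hu : u ≤ s <;>
      simp [Pi.sub_apply, Set.indicator_apply, Set.mem_Iic, hu] <;> ring)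

lemma int_left (s w : ℝ) (h : w ≤ s) :
    ∫ u in Set.Iic w, ((if u ≤ s then (1:ℝ) else 0) - Phi s) * em u = (1 - Phi s) * A w := by
  rw [setIntegral_congr_fun measurableSet_Iic
    (g := fun u => (1 - Phi s) * em u)
    (fun u hu => by rw [if_pos (le_trans hu h)])]
  rw [integral_const_mul]
  rfl

lemma int_right (s w : ℝ) (h : s ≤ w) :
    ∫ u in Set.Iic w, ((if u ≤ s then (1:ℝ) else 0) - Phi s) * em u = A s - Phi s * A w := by
  have key := intervalIntegral.integral_Iic_sub_Iic (μ := volume)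
    (f_int s).integrableOn (f_int s).integrableOn (a := s) (b := w)
  have hAint : ∫ u in Set.Ioc s w, em u = A w - A s := by
    have h2 := intervalIntegral.integral_Iic_sub_Iic (μ := volume)
      em_int.integrableOn em_int.integrableOn (a := s) (b := w)
    rw [intervalIntegral.integral_of_le h] at h2
    unfold A
    linarith [h2]
  have h1 : (∫ u in s..w, ((if u ≤ s then (1:ℝ) else 0) - Phi s) * em u)
      = -(Phi s * (A w - A s)) := by
    rw [intervalIntegral.integral_of_le h,
      setIntegral_congr_fun measurableSet_Ioc
        (g := fun u => (-Phi s) * em u)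
        (fun u hu => by rw [if_neg (not_le.2 hu.1)]; ring),
      integral_const_mul, hAint]
    ring
  have h3 : ∫ u in Set.Iic s, ((if u ≤ s then (1:ℝ) else 0) - Phi s) * em u
      = (1 - Phi s) * A s := int_left s s le_rfl
  have hr : (1 - Phi s) * A s = A s - Phi s * A s := by ring
  rw [h1, h3] at key
  linarith [key]

end SteinAux

/-- The Stein solution `g_s` is continuous on `ℝ` and infinitely differentiable on
`ℝ \ {s}`. -/
theorem steinG_continuous_smoothOn (s : ℝ) :
    Continuous (steinG s) ∧ ContDiffOn ℝ (⊤ : ℕ∞) (steinG s) {s}ᶜ := by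
  open SteinAux in
  have hexp : ContDiff ℝ (⊤ : ℕ∞) (fun w : ℝ => Real.exp (w ^ 2 / 2)) :=
    Real.contDiff_exp.comp (((contDiff_id (𝕜 := ℝ) (E := ℝ)).pow 2).div_const 2)
  have hG1 : ContDiff ℝ (⊤ : ℕ∞) (fun w => Real.exp (w ^ 2 / 2) * ((1 - Phi s) * SteinAux.A w)) :=
    hexp.mul (contDiff_const.mul SteinAux.A_contDiff)
  have hG2 : ContDiff ℝ (⊤ : ℕ∞)
      (fun w => Real.exp (w ^ 2 / 2) * (SteinAux.A s - Phi s * SteinAux.A w)) :=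
    hexp.mul (contDiff_const.sub (contDiff_const.mul SteinAux.A_contDiff))
  have e1 : ∀ w, w ≤ s → steinG s w = Real.exp (w ^ 2 / 2) * ((1 - Phi s) * SteinAux.A w) := by
    intro w hw
    unfold steinG
    rw [show (∫ u in Set.Iic w, ((if u ≤ s then (1 : ℝ) else 0) - Phi s) * Real.exp (-u ^ 2 / 2))
      = ∫ u in Set.Iic w, ((if u ≤ s then (1 : ℝ) else 0) - Phi s) * SteinAux.em u from rfl,
      SteinAux.int_left s w hw]
  have e2 : ∀ w, s ≤ w →
      steinG s w = Real.exp (w ^ 2 / 2) * (SteinAux.A s - Phi s * SteinAux.A w) := by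
    intro w hw
    unfold steinG
    rw [show (∫ u in Set.Iic w, ((if u ≤ s then (1 : ℝ) else 0) - Phi s) * Real.exp (-u ^ 2 / 2))
      = ∫ u in Set.Iic w, ((if u ≤ s then (1 : ℝ) else 0) - Phi s) * SteinAux.em u from rfl,
      SteinAux.int_right s w hw]
  constructor
  · have hfe : steinG s = fun w => if w ≤ s then
        Real.exp (w ^ 2 / 2) * ((1 - Phi s) * SteinAux.A w)
      else Real.exp (w ^ 2 / 2) * (SteinAux.A s - Phi s * SteinAux.A w) := by
      funext w
      by_cases h : w ≤ s
      · rw [if_pos h, e1 w h]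
      · rw [if_neg h, e2 w (le_of_not_ge h)]
    rw [hfe]
    exact Continuous.if_le hG1.continuous hG2.continuous continuous_id continuous_const
      (fun x hx => by have hxs : x = s := hx; subst hxs; ring)
  · apply contDiffOn_of_locally_contDiffOn
    intro x hx
    rcases lt_or_gt_of_ne (show x ≠ s from hx) with h | h
    · exact ⟨Set.Iio s, isOpen_Iio, h,
        hG1.contDiffOn.congr (fun y hy => e1 y (le_of_lt hy.2))⟩
    · exact ⟨Set.Ioi s, isOpen_Ioi, h,
        hG2.contDiffOn.congr (fun y hy => e2 y (le_of_lt hy.2))⟩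
end
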